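/- (Dudek–Mukhin) If (X, Fₙ) is an n-ary semigroup with a neutral element e, then Fₙ is derived from the binary operation F₂ defined by F₂(a,b) := Fₙ(a, e, …, e, b); that is, Fₙ(x₁,…,xₙ) = F₂(x₁, F₂(x₂, …, F₂(xₙ₋₁, xₙ))) for all x₁,…,xₙ ∈ X, and moreover F₂ is associative. -/
import Mathlib


/-- The `(k)`-fold iterated composition of a binary operation `f`,
giving a `(k+1)`-ary operation:
`iterComp f k (x₀,…,x_k) = f x₀ (f x₁ (… f x_{k-1} x_k))`. -/
def iterComp {X : Type*} (f : X → X → X) : (k : ℕ) → (Fin (k + 1) → X) → X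
  | 0, x => x 0
  | k + 1, x => f (x 0) (iterComp f k (fun i => x i.succ))

/-- `F` (an `n`-ary operation) is derived from the binary operation `f`
by iterated composition. -/
def DerivedFrom {X : Type*} (f : X → X → X) {n : ℕ} (F : (Fin n → X) → X) : Prop :=
  ∃ h : n - 1 + 1 = n, ∀ x : Fin n → X, F x = iterComp f (n - 1) (fun i => x (Fin.cast h i))

/-- `CompAt F i x` is `F(x₁,…,xᵢ,F(x_{i+1},…,x_{i+n}),x_{i+n+1},…,x_{2n-1})`
(0-indexed: the inner `F` occupies position `i`). -/
def CompAt {X : Type*} {n : ℕ} (F : (Fin n → X) → X) (i : ℕ) (x : ℕ → X) : X :=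
  F (fun j => if (j : ℕ) < i then x j
      else if (j : ℕ) = i then F (fun k => x (i + (k : ℕ)))
      else x ((j : ℕ) + n - 1))

/-- `n`-associativity of an `n`-ary operation. -/
def NAssoc {X : Type*} {n : ℕ} (F : (Fin n → X) → X) : Prop :=
  ∀ x : ℕ → X, ∀ i < n, CompAt F i x = CompAt F 0 x

/-- Idempotency of an `n`-ary operation. -/
def IdemN {X : Type*} {n : ℕ} (F : (Fin n → X) → X) : Prop :=
  ∀ a : X, F (fun _ => a) = a

/-- `e` is a neutral element of the `n`-ary operation `F`. -/
def IsNeutral {X : Type*} {n : ℕ} (F : (Fin n → X) → X) (e : X) : Prop :=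
  ∀ (x : X) (i : Fin n), F (Function.update (fun _ => e) i x) = x

/-- `F` is monotone (order-preserving or order-reversing) in its `i`-th variable. -/
def MonotoneInVar {X : Type*} [Preorder X] {n : ℕ} (F : (Fin n → X) → X) (i : Fin n) : Prop :=
  ∀ a : Fin n → X,
    Monotone (fun t => F (Function.update a i t)) ∨ Antitone (fun t => F (Function.update a i t))

/-- `F` is monotone increasing (order-preserving) in its `i`-th variable. -/
def IncreasingInVar {X : Type*} [Preorder X] {n : ℕ} (F : (Fin n → X) → X) (i : Fin n) : Prop :=
  ∀ a : Fin n → X, Monotone (fun t => F (Function.update a i t))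

/-- Associativity of a binary operation. -/
def Assoc2 {X : Type*} (f : X → X → X) : Prop := ∀ a b c, f (f a b) c = f a (f b c)

/-- A binary operation is monotone (order-preserving or order-reversing) in each variable. -/
def Mono2 {X : Type*} [Preorder X] (f : X → X → X) : Prop :=
  (∀ a, Monotone (f a) ∨ Antitone (f a)) ∧
  (∀ b, Monotone (fun a => f a b) ∨ Antitone (fun a => f a b))

/-- A binary operation is monotone increasing in each variable. -/
def Incr2 {X : Type*} [Preorder X] (f : X → X → X) : Prop :=
  (∀ a, Monotone (f a)) ∧ (∀ b, Monotone (fun a => f a b))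

/-- Idempotency of a binary operation. -/
def Idem2 {X : Type*} (f : X → X → X) : Prop := ∀ x, f x x = x

/-- `e` is a neutral element of a binary operation. -/
def Neutral2 {X : Type*} (f : X → X → X) (e : X) : Prop := ∀ a, f e a = a ∧ f a e = a

/-- The binary operation `F₂(a,b) = Fₙ(a,e,…,e,b)` associated to an `n`-ary operation. -/
def binOf {X : Type*} {n : ℕ} (F : (Fin n → X) → X) (e : X) : X → X → X :=
  fun a b => F (fun j => if (j : ℕ) = 0 then a else if (j : ℕ) = n - 1 then b else e)



section DudekMukhin

variable {X : Type*} {n : ℕ}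

lemma fin_val_mk {n m : ℕ} (h : m < n) : ((⟨m, h⟩ : Fin n) : ℕ) = m := rfl

/-- Neutrality restated with an `if` rather than `Function.update`. -/
lemma neutral_nat (F : (Fin n → X) → X) (e : X) (he : IsNeutral F e)
    (i : ℕ) (hi : i < n) (a : X) :
    F (fun j => if (j : ℕ) = i then a else e) = a := by
  have h := he a ⟨i, hi⟩
  rwa [show Function.update (fun _ => e) (⟨i, hi⟩ : Fin n) a
      = fun j : Fin n => if (j : ℕ) = i then a else e from funext fun j => by
    rw [Function.update_apply]
    by_cases hj : (j : ℕ) = i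
    · rw [if_pos hj, if_pos (Fin.ext hj)]
    · rw [if_neg hj, if_neg (fun h => hj (by rw [h]))]] at h

lemma bin_right (hn : 2 ≤ n) (F : (Fin n → X) → X) (e : X) (he : IsNeutral F e) (a : X) :
    binOf F e a e = a := by
  have h : binOf F e a e = F (fun j => if (j : ℕ) = 0 then a else e) := by
    unfold binOf; congr 1; funext j
    split_ifs <;> rfl
  rw [h, neutral_nat F e he 0 (by omega) a]

/-- Absorption at position 0:  `f c (F y) = F (c·y₀, y₁, …, y_{n-1})`. -/
lemma absorb0 (hn : 2 ≤ n) (F : (Fin n → X) → X) (hF : NAssoc F) (e : X)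
    (c : X) (y : Fin n → X) :
    binOf F e c (F y) =
      F (fun j => if (j : ℕ) = 0 then binOf F e c (y ⟨0, by omega⟩) else y j) := by
  have hn0 : 0 < n := by omega
  set z : ℕ → X := fun m =>
    if m = 0 then c else if m < n - 1 then e
    else if h : m - (n - 1) < n then y ⟨m - (n - 1), h⟩ else y ⟨0, hn0⟩ with hz
  have key := hF z (n - 1) (by omega)
  have h1 : CompAt F (n - 1) z = binOf F e c (F y) := by
    unfold CompAt binOf
    congr 1
    funext j
    have hj := j.isLt
    simp only [hz]
    by_cases h1 : (j : ℕ) = n - 1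
    · rw [if_neg (by omega), if_pos h1, if_neg (by omega), if_pos h1]
      congr 1
      funext k
      have hk := k.isLt
      split_ifs <;>
        first
          | rfl
          | omega
          | (congr 1; apply Fin.ext; simp only [fin_val_mk]; omega)
    · split_ifs <;> first | rfl | omega
  have h2 : CompAt F 0 z
      = F (fun j => if (j : ℕ) = 0 then binOf F e c (y ⟨0, by omega⟩) else y j) := by
    unfold CompAt binOf
    congr 1
    funext j
    have hj := j.isLt
    simp only [hz, Nat.zero_add]
    by_cases h0 : (j : ℕ) = 0
    · rw [if_neg (by omega), if_pos h0, if_pos h0]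
      congr 1
      funext k
      have hk := k.isLt
      split_ifs <;>
        first
          | rfl
          | omega
          | (congr 1; apply Fin.ext; simp only [fin_val_mk]; omega)
    · rw [if_neg (by omega), if_neg h0, if_neg h0]
      split_ifs <;>
        first
          | rfl
          | omega
          | (congr 1; apply Fin.ext; simp only [fin_val_mk]; omega)
  rw [← h1, key, h2]

/-- Absorption at an interior position `i ≥ 1`, for vectors whose first `i`
coordinates are `e`. -/
lemma absorbQ (hn : 2 ≤ n) (F : (Fin n → X) → X) (hF : NAssoc F) (e : X)
    (he : IsNeutral F e) (i : ℕ) (hi1 : 1 ≤ i) (hi2 : i ≤ n - 1)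
    (c : X) (w : Fin n → X) (hw : ∀ j : Fin n, (j : ℕ) < i → w j = e) :
    F (fun j => if (j : ℕ) = i then binOf F e c (w j) else w j)
      = F (fun j => if (j : ℕ) = 0 then c else w j) := by
  have hn0 : 0 < n := by omega
  set z : ℕ → X := fun m =>
    if m < i then e else if m = i then c else if m < i + n - 1 then e
    else if h : m - (n - 1) < n then w ⟨m - (n - 1), h⟩ else w ⟨0, hn0⟩ with hz
  have key := hF z i (by omega)
  have h1 : CompAt F i z
      = F (fun j => if (j : ℕ) = i then binOf F e c (w j) else w j) := by
    unfold CompAt binOf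
    congr 1
    funext j
    have hj := j.isLt
    simp only [hz]
    by_cases heq : (j : ℕ) = i
    · rw [if_neg (by omega), if_pos heq, if_pos heq]
      congr 1
      funext k
      have hk := k.isLt
      split_ifs <;>
        first
          | rfl
          | omega
          | (congr 1; apply Fin.ext; simp only [fin_val_mk]; omega)
    · split_ifs <;>
        first
          | rfl
          | omega
          | (congr 1; apply Fin.ext; simp only [fin_val_mk]; omega)
          | (exact (hw j (by omega)).symm)
          | (exact hw j (by omega))
  have h2 : CompAt F 0 z = F (fun j => if (j : ℕ) = 0 then c else w j) := by
    unfold CompAt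
    congr 1
    funext j
    have hj := j.isLt
    simp only [hz, Nat.zero_add]
    by_cases h0 : (j : ℕ) = 0
    · rw [if_neg (by omega), if_pos h0, if_pos h0]
      refine Eq.trans ?_ (neutral_nat F e he i (by omega) c)
      congr 1
      funext k
      have hk := k.isLt
      split_ifs <;> first | rfl | omega
    · rw [if_neg (by omega), if_neg h0, if_neg h0]
      split_ifs <;>
        first
          | rfl
          | omega
          | (congr 1; apply Fin.ext; simp only [fin_val_mk]; omega)
          | (exact (hw j (by omega)).symm)
          | (exact hw j (by omega))
  rw [← h1, key, h2]

lemma iterComp_cast {X : Type*} (f : X → X → X) {k k' : ℕ} (h : k = k')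
    (x : Fin (k + 1) → X) :
    iterComp f k x = iterComp f k' (fun i => x (Fin.cast (by rw [h]) i)) := by
  subst h
  rfl

end DudekMukhin

/-- Dudek–Mukhin: an `n`-ary semigroup with neutral element `e` is derived
from the associative binary operation `F₂(a,b) = Fₙ(a,e,…,e,b)`. -/
theorem stmt4 {X : Type*} (n : ℕ) (hn : 2 ≤ n) (F : (Fin n → X) → X)
    (hF : NAssoc F) (e : X) (he : IsNeutral F e) :
    Assoc2 (binOf F e) ∧ DerivedFrom (binOf F e) F := by
  have hn0 : 0 < n := by omega
  have hre : ∀ a : X, binOf F e a e = a := fun a => bin_right hn F e he a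
  -- associativity
  have assoc : Assoc2 (binOf F e) := by
    intro a b c
    have h := absorb0 hn F hF e a
      (fun j : Fin n => if (j : ℕ) = 0 then b else if (j : ℕ) = n - 1 then c else e)
    have h2 : binOf F e (binOf F e a b) c
        = F (fun j => if (j : ℕ) = 0 then
            binOf F e a ((fun j : Fin n => if (j : ℕ) = 0 then b
                else if (j : ℕ) = n - 1 then c else e) ⟨0, by omega⟩)
            else (fun j : Fin n => if (j : ℕ) = 0 then b
                else if (j : ℕ) = n - 1 then c else e) j) := by
      show F _ = F _
      congr 1
      funext j
      by_cases h0 : (j : ℕ) = 0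
      · rw [if_pos h0, if_pos h0]
        congr 1
        try simp only [fin_val_mk]
        try rw [if_pos rfl]
      · simp only [if_neg h0]
    exact h2.trans h.symm
  -- the main induction
  have D : ∀ k, ∀ _hk : k ≤ n - 2, ∀ x : Fin n → X,
      F (fun j => if (j : ℕ) < n - 1 - k then e else x j)
        = iterComp (binOf F e) k
            (fun m : Fin (k + 1) => x ⟨n - 1 - k + (m : ℕ), by have := m.isLt; omega⟩) := by
    intro k
    induction k with
    | zero =>
      intro _ x
      have hfun : (fun j : Fin n => if (j : ℕ) < n - 1 - 0 then e else x j)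
          = fun j : Fin n => if (j : ℕ) = n - 1 then x ⟨n - 1, by omega⟩ else e := by
        funext j
        have hj := j.isLt
        by_cases h1 : (j : ℕ) = n - 1
        · rw [if_neg (by omega), if_pos h1]
          congr 1
          exact Fin.ext h1
        · rw [if_pos (by omega), if_neg h1]
      rw [hfun, neutral_nat F e he (n - 1) (by omega) _]
      show x _ = x _
      first
        | rfl
        | (congr 1
           apply Fin.ext
           simp only [fin_val_mk, Fin.val_zero]
           try omega)
    | succ k ih =>
      intro hk x
      have hik := ih (by omega) x
      set i := n - 1 - (k + 1) with hidef
      have hilt : i < n := by omega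
      have hi1 : 1 ≤ i := by omega
      have hi2 : i ≤ n - 1 := by omega
      set w : Fin n → X := fun j : Fin n => if (j : ℕ) < i + 1 then e else x j with hwdef
      have hwe1 : ∀ j : Fin n, (j : ℕ) < i + 1 → w j = e := by
        intro j hj
        simp only [hwdef]
        rw [if_pos hj]
      have hwe : ∀ j : Fin n, (j : ℕ) < i → w j = e := fun j hj => hwe1 j (by omega)
      have hQ := absorbQ hn F hF e he i hi1 hi2 (x ⟨i, hilt⟩) w hwe
      have hA := absorb0 hn F hF e (x ⟨i, hilt⟩) w
      have e1 : F (fun j => if (j : ℕ) < i then e else x j)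
          = F (fun j => if (j : ℕ) = i then binOf F e (x ⟨i, hilt⟩) (w j) else w j) := by
        congr 1
        funext j
        have hj := j.isLt
        by_cases hji : (j : ℕ) = i
        · rw [if_neg (by omega), if_pos hji, hwe1 j (by omega), hre]
          congr 1
          exact Fin.ext hji
        · rw [if_neg hji]
          simp only [hwdef]
          by_cases hlt : (j : ℕ) < i
          · rw [if_pos hlt, if_pos (by omega)]
          · rw [if_neg hlt, if_neg (by omega)]
      have hw0 : w ⟨0, hn0⟩ = e := hwe1 _ (by simp only [fin_val_mk]; omega)
      have e2 : F (fun j => if (j : ℕ) = 0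
              then binOf F e (x ⟨i, hilt⟩) (w ⟨0, hn0⟩) else w j)
          = F (fun j => if (j : ℕ) = 0 then x ⟨i, hilt⟩ else w j) := by
        rw [hw0]
        congr 1
        funext j
        by_cases h0 : (j : ℕ) = 0
        · rw [if_pos h0, if_pos h0, hre]
        · rw [if_neg h0, if_neg h0]
      have main : F (fun j => if (j : ℕ) < i then e else x j)
          = binOf F e (x ⟨i, hilt⟩) (F w) :=
        e1.trans (hQ.trans (e2.symm.trans hA.symm))
      have hwih : F w = iterComp (binOf F e) k
          (fun m : Fin (k + 1) => x ⟨n - 1 - k + (m : ℕ), by have := m.isLt; omega⟩) := by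
        refine Eq.trans ?_ hik
        congr 1
        funext j
        simp only [hwdef]
        rw [show i + 1 = n - 1 - k by omega]
      rw [main, hwih]
      rw [iterComp]
      refine congrArg₂ (binOf F e) (congrArg x (Fin.ext ?_))
        (congrArg _ (funext fun m => congrArg x (Fin.ext ?_)))
      · simp only [fin_val_mk, Fin.val_zero]
        try omega
      · have hm := m.isLt
        simp only [fin_val_mk, Fin.val_succ]
        omega
  -- conclusion
  refine ⟨assoc, by omega, ?_⟩
  intro x
  set y : Fin n → X := fun j : Fin n => if (j : ℕ) < 1 then e else x j with hydef
  have hy1 : ∀ j : Fin n, (j : ℕ) < 1 → y j = e := by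
    intro j hj
    simp only [hydef]
    rw [if_pos hj]
  have hA := absorb0 hn F hF e (x ⟨0, hn0⟩) y
  have hy0 : y ⟨0, hn0⟩ = e := hy1 _ (by simp only [fin_val_mk]; omega)
  have e0 : F (fun j => if (j : ℕ) = 0
          then binOf F e (x ⟨0, hn0⟩) (y ⟨0, hn0⟩) else y j)
      = F x := by
    rw [hy0]
    congr 1
    funext j
    by_cases h0 : (j : ℕ) = 0
    · rw [if_pos h0, hre]
      congr 1
      exact Fin.ext h0.symm
    · rw [if_neg h0]
      simp only [hydef]
      rw [if_neg (by omega)]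
  have hFx : F x = binOf F e (x ⟨0, hn0⟩) (F y) := (hA.trans e0).symm
  have hDy : F y = iterComp (binOf F e) (n - 2)
      (fun m : Fin (n - 2 + 1) =>
        x ⟨n - 1 - (n - 2) + (m : ℕ), by have := m.isLt; omega⟩) := by
    refine Eq.trans ?_ (D (n - 2) (le_refl _) x)
    congr 1
    funext j
    simp only [hydef]
    split_ifs <;> first | rfl | omega
  rw [hFx, hDy]
  have hcast : n - 1 = n - 2 + 1 := by omega
  conv_rhs => rw [iterComp_cast (binOf F e) hcast]
  rw [iterComp]
  refine congrArg₂ (binOf F e) (congrArg x (Fin.ext ?_))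
    (congrArg _ (funext fun m => congrArg x (Fin.ext ?_)))
  · simp only [fin_val_mk, Fin.coe_cast, Fin.val_zero]
    try omega
  · have hm := m.isLt
    simp only [fin_val_mk, Fin.coe_cast, Fin.val_succ]
    omega
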